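/- arXiv:1804.10950 — 3 statements merged into one kernel-verified Lean document; each statement's English description precedes it below -/
import Mathlib

section
/- Let μ ∈ ℝ, σ > 0, β > 0, n ≥ 1 and let x₁, …, xₙ > 0. Then the density power divergence objective function satisfies ∫₀^∞ f_{μ,σ}(x)^{1+β} dx − (1 + 1/β) · (1/n) ∑_{i=1}^n f_{μ,σ}(x_i)^β = (1+β) · h, where h = (1/(σ^β (2π)^{β/2})) · [ exp(−βμ + σ²β²/(2(1+β))) / (1+β)^{3/2} − (1/(nβ)) ∑_{i=1}^n x_i^{−β} exp(−β(log x_i − μ)²/(2σ²)) ]. -/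
/-!
Substituting `t = exp y` turns `∫₀^∞ f(t)^(1+β) dt` into the integral over `ℝ` of a
constant times the exponential of a quadratic polynomial in `y`, which completing the square
reduces to the Gaussian integral. The empirical term only needs the closed form of `f(x)^β`.
-/

open Real MeasureTheory Set Finset

/-- The log-normal density with parameters `μ` and `σ`. -/
noncomputable def lognormalPdf (μ σ : ℝ) (x : ℝ) : ℝ :=
  if 0 < x then
    (1 / (x * σ * Real.sqrt (2 * Real.pi))) * Real.exp (-(Real.log x - μ) ^ 2 / (2 * σ ^ 2))
  else 0

theorem lognormalPdf_rpow (μ : ℝ) {σ : ℝ} (hσ : 0 ≤ σ) (p : ℝ) {t : ℝ} (ht : 0 < t) :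
    lognormalPdf μ σ t ^ p =
      (σ ^ p * (2 * π) ^ (p / 2))⁻¹ *
        (t ^ (-p) * exp (-p * (log t - μ) ^ 2 / (2 * σ ^ 2))) := by
  have hsqrt : √(2 * π) ^ p = (2 * π) ^ (p / 2) := by
    rw [sqrt_eq_rpow, ← rpow_mul (by positivity)]
    ring_nf
  rw [lognormalPdf, if_pos ht, one_div, mul_rpow (by positivity) (exp_nonneg _),
    inv_rpow (by positivity), mul_rpow (by positivity) (by positivity),
    mul_rpow ht.le hσ, hsqrt, rpow_neg ht.le, ← exp_mul]
  field_simp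

theorem integral_Ioi_zero_eq_integral_exp_smul_comp_exp {E : Type*} [NormedAddCommGroup E]
    [NormedSpace ℝ E] (g : ℝ → E) :
    ∫ t in Ioi 0, g t = ∫ y, exp y • g (exp y) := by
  rw [← range_exp, ← image_univ, integral_image_eq_integral_abs_deriv_smul MeasurableSet.univ
    (fun y _ => (hasDerivAt_exp y).hasDerivWithinAt) exp_injective.injOn, Measure.restrict_univ]
  simp only [abs_of_pos (exp_pos _)]

theorem integral_exp_neg_mul_sq_add_mul_add {a : ℝ} (ha : a ≠ 0) (b d : ℝ) :
    ∫ y, exp (-a * y ^ 2 + b * y + d) = √(π / a) * exp (b ^ 2 / (4 * a) + d) := by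
  have hsquare : ∀ y,
      -a * y ^ 2 + b * y + d = -a * (y - b / (2 * a)) ^ 2 + (b ^ 2 / (4 * a) + d) := by
    intro y; field_simp; ring
  simp_rw [hsquare, exp_add, integral_mul_const,
    integral_sub_right_eq_self (fun y => exp (-a * y ^ 2)), integral_gaussian]

theorem integral_lognormalPdf_rpow_one_add (μ : ℝ) {σ β : ℝ} (hσ : 0 < σ) (hβ : -1 < β) :
    ∫ t in Ioi 0, lognormalPdf μ σ t ^ (1 + β) =
      exp (-β * μ + σ ^ 2 * β ^ 2 / (2 * (1 + β))) /
        (σ ^ β * (2 * π) ^ (β / 2) * √(1 + β)) := by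
  have hβ' : 0 < 1 + β := by linarith
  have hK : σ ^ (1 + β) * (2 * π) ^ ((1 + β) / 2) =
      σ ^ β * (2 * π) ^ (β / 2) * (σ * √(2 * π)) := by
    rw [add_div, rpow_add hσ, rpow_add (by positivity), rpow_one, ← sqrt_eq_rpow]
    ring
  have hintegrand : ∀ y, exp y • lognormalPdf μ σ (exp y) ^ (1 + β) =
      (σ ^ (1 + β) * (2 * π) ^ ((1 + β) / 2))⁻¹ *
        exp (-((1 + β) / (2 * σ ^ 2)) * y ^ 2 + ((1 + β) * μ / σ ^ 2 - β) * y +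
          -(1 + β) * μ ^ 2 / (2 * σ ^ 2)) := by
    intro y
    rw [smul_eq_mul, lognormalPdf_rpow μ hσ.le _ (exp_pos y), log_exp, ← exp_mul, mul_left_comm,
      ← exp_add, ← exp_add]
    congr 2
    field_simp
    ring
  have hsqrt : √(π / ((1 + β) / (2 * σ ^ 2))) = σ * √(2 * π) / √(1 + β) := by
    rw [div_div_eq_mul_div, show π * (2 * σ ^ 2) = σ ^ 2 * (2 * π) by ring, sqrt_div' _ hβ'.le,
      sqrt_mul (sq_nonneg σ), sqrt_sq hσ.le]
  simp_rw [integral_Ioi_zero_eq_integral_exp_smul_comp_exp, hintegrand, integral_const_mul]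
  rw [integral_exp_neg_mul_sq_add_mul_add (by positivity), hsqrt, hK]
  have hsqrt_pos : 0 < √(1 + β) := sqrt_pos.mpr hβ'
  field_simp
  congr 1
  field_simp
  ring

theorem dpd_objective_eq_general (μ σ β : ℝ) (hσ : 0 < σ) (hβ : 0 < β)
    (n : ℕ) (x : Fin n → ℝ) (hx : ∀ i, 0 < x i) :
    (∫ t in Ioi (0 : ℝ), lognormalPdf μ σ t ^ (1 + β)) -
        (1 + 1 / β) * ((1 : ℝ) / n) * ∑ i, lognormalPdf μ σ (x i) ^ β =
      (1 + β) *
        ((1 / (σ ^ β * (2 * Real.pi) ^ (β / 2))) *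
          (Real.exp (-β * μ + σ ^ 2 * β ^ 2 / (2 * (1 + β))) / (1 + β) ^ ((3 : ℝ) / 2) -
            (1 / (n * β)) *
              ∑ i, (x i) ^ (-β) *
                Real.exp (-β * (Real.log (x i) - μ) ^ 2 / (2 * σ ^ 2)))) := by
  have hβ' : 0 < 1 + β := by linarith
  have hsum : ∑ i, lognormalPdf μ σ (x i) ^ β = (σ ^ β * (2 * π) ^ (β / 2))⁻¹ *
      ∑ i, x i ^ (-β) * exp (-β * (log (x i) - μ) ^ 2 / (2 * σ ^ 2)) := by
    rw [mul_sum]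
    exact sum_congr rfl fun i _ => lognormalPdf_rpow μ hσ.le β (hx i)
  have hpow : (1 + β) ^ ((3 : ℝ) / 2) = (1 + β) * √(1 + β) := by
    rw [show (3 : ℝ) / 2 = 1 + 1 / 2 by norm_num, rpow_add hβ', rpow_one, sqrt_eq_rpow]
  rw [integral_lognormalPdf_rpow_one_add μ hσ (by linarith), hsum, hpow, ← one_div_mul_one_div]
  have hsqrt_pos : 0 < √(1 + β) := sqrt_pos.mpr hβ'
  field_simp
  ring

/-- For a log-normal density, the density power divergence objective function equals
`(1+β) · h_{n,β}(μ,σ)`. -/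
theorem dpd_objective_eq (μ σ β : ℝ) (hσ : 0 < σ) (hβ : 0 < β)
    (n : ℕ) (hn : 1 ≤ n) (x : Fin n → ℝ) (hx : ∀ i, 0 < x i) :
    (∫ t in Ioi (0 : ℝ), lognormalPdf μ σ t ^ (1 + β)) -
        (1 + 1 / β) * ((1 : ℝ) / n) * ∑ i, lognormalPdf μ σ (x i) ^ β =
      (1 + β) *
        ((1 / (σ ^ β * (2 * Real.pi) ^ (β / 2))) *
          (Real.exp (-β * μ + σ ^ 2 * β ^ 2 / (2 * (1 + β))) / (1 + β) ^ ((3 : ℝ) / 2) -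
            (1 / (n * β)) *
              ∑ i, (x i) ^ (-β) *
                Real.exp (-β * (Real.log (x i) - μ) ^ 2 / (2 * σ ^ 2)))) :=
  dpd_objective_eq_general μ σ β hσ hβ n x hx
end

section
/- Let μ ∈ ℝ, σ > 0 and β ≥ 0. Then the (1,1) entry of the matrix K_β(μ,σ) = ∫₀^∞ u uᵀ f_{μ,σ}^{1+2β} dx − ξ ξᵀ (where ξ = ∫₀^∞ u f_{μ,σ}^{1+β} dx) satisfies ∫₀^∞ u₁(x)² f_{μ,σ}(x)^{1+2β} dx − ( ∫₀^∞ u₁(x) f_{μ,σ}(x)^{1+β} dx )² = L*(β,μ,σ) · (1 + 2β + 4β²σ²)/σ − L**(β,μ,σ) · σ²β². -/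
/-!
Substituting `x = exp y` turns `exp y * f(exp y) ^ p` into a constant multiple
`K_p = lognormalPowConst μ σ p` of the density of `N(μ + (1 - p) σ² / p, σ² / p)`: the exponent
`(1 - p) y - p (y - μ)² / (2σ²)` is a quadratic in `y` whose square can be completed. Since
`u₁(exp y) = (y - μ) / σ²`, both integrals are then the first two moments of this Gaussian about
`μ`, and it remains to express `K_{1+2β}` and `K_{1+β}²` through `L*` and `L**`.
-/

open Real MeasureTheory Set

/-- First component of the score function of the log-normal model. -/
noncomputable def scoreU1 (μ σ : ℝ) (x : ℝ) : ℝ := (Real.log x - μ) / σ ^ 2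

/-- Second component of the score function of the log-normal model. -/
noncomputable def scoreU2 (μ σ : ℝ) (x : ℝ) : ℝ := ((Real.log x - μ) ^ 2 - σ ^ 2) / σ ^ 3

/-- The factor `L*(β, μ, σ)`. -/
noncomputable def Lstar (β μ σ : ℝ) : ℝ :=
  Real.exp (-2 * β * μ + 2 * β ^ 2 * σ ^ 2 / (1 + 2 * β)) /
    (σ ^ (2 * β + 1) * (2 * Real.pi) ^ β * (1 + 2 * β) ^ ((5 : ℝ) / 2))

/-- The factor `L**(β, μ, σ)`. -/
noncomputable def Lstarstar (β μ σ : ℝ) : ℝ :=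
  Real.exp (-2 * β * μ + β ^ 2 * σ ^ 2 / (1 + β)) /
    (σ ^ (2 * β + 2) * (2 * Real.pi) ^ β * (1 + β) ^ 3)

open ProbabilityTheory
open scoped NNReal

lemma integral_Ioi_eq_integral_exp_mul_comp_exp (g : ℝ → ℝ) :
    ∫ x in Ioi (0 : ℝ), g x = ∫ y, exp y * g (exp y) := by
  have h := integral_image_eq_integral_abs_deriv_smul MeasurableSet.univ
    (fun x _ => (hasDerivAt_exp x).hasDerivWithinAt) exp_injective.injOn g
  rw [image_univ, range_exp] at h
  simpa [abs_exp] using h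

namespace ProbabilityTheory

variable (m a : ℝ) (v : ℝ≥0)

lemma integral_sub_const_gaussianReal : ∫ y, (y - a) ∂gaussianReal m v = m - a := by
  rw [integral_sub (f := fun y => y) ((memLp_id_gaussianReal 1).integrable le_rfl)
    (integrable_const a), integral_id_gaussianReal, integral_const, probReal_univ, one_smul]

lemma integral_sub_const_sq_gaussianReal :
    ∫ y, (y - a) ^ 2 ∂gaussianReal m v = v + (m - a) ^ 2 := by
  have h := variance_eq_sub (X := fun y => y - a)
    ((memLp_id_gaussianReal (μ := m) (v := v) 2).sub (memLp_const a))
  rw [variance_sub_const (X := fun y => y) aestronglyMeasurable_id, variance_fun_id_gaussianReal,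
    integral_sub_const_gaussianReal] at h
  simp only [Pi.pow_apply] at h
  linarith

end ProbabilityTheory

noncomputable def lognormalPowConst (μ σ p : ℝ) : ℝ :=
  exp ((1 - p) * μ + (1 - p) ^ 2 * σ ^ 2 / (2 * p)) /
    (√p * (2 * π * σ ^ 2) ^ ((p - 1) / 2))

lemma lognormalPdf_exp {σ : ℝ} (hσ : 0 < σ) (μ y : ℝ) :
    lognormalPdf μ σ (exp y) =
      exp (-y - (y - μ) ^ 2 / (2 * σ ^ 2)) * (2 * π * σ ^ 2) ^ (-(1 / 2) : ℝ) := by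
  rw [lognormalPdf, if_pos (exp_pos y), log_exp, rpow_neg (by positivity), ← Real.sqrt_eq_rpow,
    sqrt_mul' _ (sq_nonneg σ), sqrt_sq hσ.le, sub_eq_add_neg (-y), exp_add, exp_neg]
  field_simp

lemma gaussianPDFReal_sq_div {σ p : ℝ} (hσ : 0 < σ) (hp : 0 < p) (m y : ℝ) :
    gaussianPDFReal m (σ ^ 2 / p).toNNReal y =
      √p * (2 * π * σ ^ 2) ^ (-(1 / 2) : ℝ) * exp (-p * (y - m) ^ 2 / (2 * σ ^ 2)) := by
  rw [gaussianPDFReal_def, Real.coe_toNNReal _ (by positivity), rpow_neg (by positivity),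
    ← Real.sqrt_eq_rpow, mul_div_assoc', sqrt_div' _ hp.le]
  field_simp

lemma exp_mul_lognormalPdf_exp_rpow {σ p : ℝ} (hσ : 0 < σ) (hp : 0 < p) (μ y : ℝ) :
    exp y * lognormalPdf μ σ (exp y) ^ p = lognormalPowConst μ σ p *
      gaussianPDFReal (μ + (1 - p) * σ ^ 2 / p) (σ ^ 2 / p).toNNReal y := by
  have hs : 0 < 2 * π * σ ^ 2 := by positivity
  have hexp : exp y * exp ((-y - (y - μ) ^ 2 / (2 * σ ^ 2)) * p) =
      exp ((1 - p) * μ + (1 - p) ^ 2 * σ ^ 2 / (2 * p)) *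
        exp (-p * (y - (μ + (1 - p) * σ ^ 2 / p)) ^ 2 / (2 * σ ^ 2)) := by
    rw [← exp_add, ← exp_add]
    congr 1
    field_simp
    ring
  rw [lognormalPdf_exp hσ, gaussianPDFReal_sq_div hσ hp, lognormalPowConst,
    mul_rpow (exp_pos _).le (rpow_nonneg hs.le _), ← exp_mul, ← rpow_mul hs.le,
    show -(1 / 2) * p = -((p - 1) / 2) + -(1 / 2) by ring, rpow_add hs,
    rpow_neg hs.le ((p - 1) / 2), ← mul_assoc, hexp]
  have hsqrt : √p ≠ 0 := (sqrt_pos.2 hp).ne'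
  field_simp

lemma integral_Ioi_comp_log_mul_lognormalPdf_rpow {σ p : ℝ} (hσ : 0 < σ) (hp : 0 < p)
    (μ : ℝ) (g : ℝ → ℝ) :
    ∫ x in Ioi (0 : ℝ), g (log x) * lognormalPdf μ σ x ^ p = lognormalPowConst μ σ p *
      ∫ y, g y ∂gaussianReal (μ + (1 - p) * σ ^ 2 / p) (σ ^ 2 / p).toNNReal := by
  have hv : (σ ^ 2 / p).toNNReal ≠ 0 := by positivity
  rw [integral_Ioi_eq_integral_exp_mul_comp_exp, integral_gaussianReal_eq_integral_smul hv,
    ← integral_const_mul]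
  congr 1 with y
  rw [log_exp, mul_left_comm, exp_mul_lognormalPdf_exp_rpow hσ hp, smul_eq_mul]
  ring

lemma integral_scoreU1_mul_lognormalPdf_rpow {σ p : ℝ} (hσ : 0 < σ) (hp : 0 < p) (μ : ℝ) :
    ∫ x in Ioi (0 : ℝ), scoreU1 μ σ x * lognormalPdf μ σ x ^ p =
      lognormalPowConst μ σ p * ((1 - p) / p) := by
  unfold scoreU1
  rw [integral_Ioi_comp_log_mul_lognormalPdf_rpow hσ hp μ (fun t => (t - μ) / σ ^ 2),
    integral_div, integral_sub_const_gaussianReal]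
  field_simp
  ring

lemma integral_scoreU1_sq_mul_lognormalPdf_rpow {σ p : ℝ} (hσ : 0 < σ) (hp : 0 < p)
    (μ : ℝ) :
    ∫ x in Ioi (0 : ℝ), scoreU1 μ σ x ^ 2 * lognormalPdf μ σ x ^ p =
      lognormalPowConst μ σ p * ((p + (1 - p) ^ 2 * σ ^ 2) / (p ^ 2 * σ ^ 2)) := by
  unfold scoreU1
  rw [integral_Ioi_comp_log_mul_lognormalPdf_rpow hσ hp μ (fun t => ((t - μ) / σ ^ 2) ^ 2)]
  simp only [div_pow]
  rw [integral_div, integral_sub_const_sq_gaussianReal, Real.coe_toNNReal _ (by positivity)]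
  field_simp
  ring

lemma mul_sq_rpow {a x : ℝ} (ha : 0 ≤ a) (hx : 0 ≤ x) (y : ℝ) :
    (a * x ^ 2) ^ y = a ^ y * x ^ (2 * y) := by
  rw [mul_rpow ha (sq_nonneg x), ← rpow_natCast_mul hx]
  norm_num

lemma lognormalPowConst_one_add_two_mul {σ β : ℝ} (hσ : 0 < σ) (hp : 0 < 1 + 2 * β)
    (μ : ℝ) :
    lognormalPowConst μ σ (1 + 2 * β) = σ * (1 + 2 * β) ^ 2 * Lstar β μ σ := by
  have hexp : (1 - (1 + 2 * β)) * μ + (1 - (1 + 2 * β)) ^ 2 * σ ^ 2 / (2 * (1 + 2 * β)) =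
      -2 * β * μ + 2 * β ^ 2 * σ ^ 2 / (1 + 2 * β) := by
    field_simp
    ring
  have hpow : (1 + 2 * β) ^ ((5 : ℝ) / 2) = (1 + 2 * β) ^ 2 * √(1 + 2 * β) := by
    rw [show (5 : ℝ) / 2 = 2 + 1 / 2 by norm_num, rpow_add hp, rpow_two, Real.sqrt_eq_rpow]
  rw [lognormalPowConst, Lstar, hexp, show (1 + 2 * β - 1) / 2 = β by ring,
    mul_sq_rpow (by positivity) hσ.le β, rpow_add_one hσ.ne', hpow]
  have hsqrt : √(1 + 2 * β) ≠ 0 := (sqrt_pos.2 hp).ne'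
  field_simp

lemma lognormalPowConst_one_add_sq {σ β : ℝ} (hσ : 0 < σ) (hq : 0 < 1 + β) (μ : ℝ) :
    lognormalPowConst μ σ (1 + β) ^ 2 = σ ^ 2 * (1 + β) ^ 2 * Lstarstar β μ σ := by
  have hexp : exp ((1 - (1 + β)) * μ + (1 - (1 + β)) ^ 2 * σ ^ 2 / (2 * (1 + β))) ^ 2 =
      exp (-2 * β * μ + β ^ 2 * σ ^ 2 / (1 + β)) := by
    rw [← exp_nat_mul]
    congr 1
    field_simp
    ring
  have hpow : ((2 * π * σ ^ 2) ^ ((1 + β - 1) / 2)) ^ 2 = (2 * π * σ ^ 2) ^ β := by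
    rw [← rpow_mul_natCast (by positivity)]
    congr 1
    push_cast
    ring
  rw [lognormalPowConst, Lstarstar, div_pow, hexp, mul_pow, sq_sqrt hq.le, hpow,
    mul_sq_rpow (by positivity) hσ.le β, show 2 * β + 2 = 2 * β + 1 + 1 by ring,
    rpow_add_one hσ.ne', rpow_add_one hσ.ne']
  field_simp

/-- The `(1,1)` entry of the matrix `K_β(μ,σ)`. -/
theorem K_entry_11 (μ σ β : ℝ) (hσ : 0 < σ) (hβ : 0 ≤ β) :
    (∫ x in Ioi (0 : ℝ), scoreU1 μ σ x ^ 2 * lognormalPdf μ σ x ^ (1 + 2 * β)) -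
        (∫ x in Ioi (0 : ℝ), scoreU1 μ σ x * lognormalPdf μ σ x ^ (1 + β)) ^ 2 =
      Lstar β μ σ * ((1 + 2 * β + 4 * β ^ 2 * σ ^ 2) / σ) -
        Lstarstar β μ σ * (σ ^ 2 * β ^ 2) := by
  have hp : 0 < 1 + 2 * β := by linarith
  have hq : 0 < 1 + β := by linarith
  rw [integral_scoreU1_sq_mul_lognormalPdf_rpow hσ hp μ,
    integral_scoreU1_mul_lognormalPdf_rpow hσ hq μ, lognormalPowConst_one_add_two_mul hσ hp μ,
    mul_pow, lognormalPowConst_one_add_sq hσ hq μ]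
  field_simp
  ring
end

section
/- Let μ ∈ ℝ, σ > 0 and β > 0. Then the second component of the influence-function kernel of the minimum density power divergence estimator is bounded on the positive half-line: there exists M > 0 such that for all x > 0, |u₂(x) · f_{μ,σ}(x)^β| ≤ M. -/
open Real MeasureTheory Set

/-!
Completing the square in `log x`, the factor `1 / x` only shifts the Gaussian:
`f_{μ,σ}(x) = C · exp (-s² / (2σ²))` with `s = log x - (μ - σ²)`. Hence
`f_{μ,σ}(x)^β = C^β · exp (-β s² / (2σ²))`, while `u₂(x)` is a quadratic polynomial in `s`, and a
quadratic times `exp (-a s²)` is bounded because `y e^{-y} ≤ e^{-1}`.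
-/

lemma quadratic_mul_exp_neg_mul_sq_le {a b c : ℝ} (ha : 0 < a) (hb : 0 ≤ b) (hc : 0 ≤ c)
    (s : ℝ) : (b * s ^ 2 + c) * exp (-(a * s ^ 2)) ≤ b * exp (-1) / a + c := by
  have hsq : s ^ 2 * exp (-(a * s ^ 2)) ≤ exp (-1) / a := by
    rw [le_div_iff₀ ha]
    linarith [mul_exp_neg_le_exp_neg_one (a * s ^ 2)]
  have hexp : exp (-(a * s ^ 2)) ≤ 1 := exp_le_one_iff.mpr (by nlinarith [sq_nonneg s])
  calc (b * s ^ 2 + c) * exp (-(a * s ^ 2))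
      = b * (s ^ 2 * exp (-(a * s ^ 2))) + c * exp (-(a * s ^ 2)) := by ring
    _ ≤ b * (exp (-1) / a) + c * 1 := by gcongr
    _ = b * exp (-1) / a + c := by ring

lemma lognormalPdf_eq_mul_exp (μ : ℝ) {σ x : ℝ} (hσ : σ ≠ 0) (hx : 0 < x) :
    lognormalPdf μ σ x = exp (σ ^ 2 / 2 - μ) / (σ * √(2 * π)) *
      exp (-(log x - (μ - σ ^ 2)) ^ 2 / (2 * σ ^ 2)) := by
  have hexp : exp (-log x) * exp (-(log x - μ) ^ 2 / (2 * σ ^ 2)) =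
      exp (σ ^ 2 / 2 - μ) * exp (-(log x - (μ - σ ^ 2)) ^ 2 / (2 * σ ^ 2)) := by
    rw [← exp_add, ← exp_add]
    congr 1
    field_simp
    ring
  rw [lognormalPdf, if_pos hx]
  calc 1 / (x * σ * √(2 * π)) * exp (-(log x - μ) ^ 2 / (2 * σ ^ 2))
      = exp (-log x) * exp (-(log x - μ) ^ 2 / (2 * σ ^ 2)) / (σ * √(2 * π)) := by
        rw [exp_neg, exp_log hx]
        ring
    _ = _ := by
        rw [hexp]
        ring

lemma lognormalPdf_rpow_eq_mul_exp (μ : ℝ) {σ x : ℝ} (hσ : 0 < σ) (hx : 0 < x) (β : ℝ) :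
    lognormalPdf μ σ x ^ β = (exp (σ ^ 2 / 2 - μ) / (σ * √(2 * π))) ^ β *
      exp (-(β / (2 * σ ^ 2) * (log x - (μ - σ ^ 2)) ^ 2)) := by
  have hC : 0 ≤ exp (σ ^ 2 / 2 - μ) / (σ * √(2 * π)) := by positivity
  rw [lognormalPdf_eq_mul_exp μ hσ.ne' hx, mul_rpow hC (exp_pos _).le, ← exp_mul]
  congr 2
  ring

lemma abs_scoreU2_le (μ : ℝ) {σ : ℝ} (hσ : 0 < σ) (x : ℝ) :
    |scoreU2 μ σ x| ≤ (2 * (log x - (μ - σ ^ 2)) ^ 2 + (2 * σ ^ 4 + σ ^ 2)) / σ ^ 3 := by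
  set s := log x - (μ - σ ^ 2)
  have ht : log x - μ = s - σ ^ 2 := by ring
  rw [scoreU2, ht, abs_div, abs_of_pos (pow_pos hσ 3)]
  refine div_le_div_of_nonneg_right (abs_le.mpr ⟨?_, ?_⟩) (pow_pos hσ 3).le <;>
    nlinarith [sq_nonneg (s + σ ^ 2), sq_nonneg s]

/-- For `β > 0`, the second component of the influence-function kernel of the MDPD estimator,
`u₂(x) · f_{μ,σ}(x)^β`, is bounded on the positive half-line. -/
theorem if_kernel_second_bounded (μ σ β : ℝ) (hσ : 0 < σ) (hβ : 0 < β) :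
    ∃ M > 0, ∀ x > 0, |scoreU2 μ σ x * lognormalPdf μ σ x ^ β| ≤ M := by
  set C := (exp (σ ^ 2 / 2 - μ) / (σ * √(2 * π))) ^ β
  have hC : 0 < C := by positivity
  refine ⟨C / σ ^ 3 * (2 * exp (-1) / (β / (2 * σ ^ 2)) + (2 * σ ^ 4 + σ ^ 2)),
    by positivity, fun x hx => ?_⟩
  set s := log x - (μ - σ ^ 2)
  have hgauss := quadratic_mul_exp_neg_mul_sq_le (by positivity : 0 < β / (2 * σ ^ 2))
    zero_le_two (by positivity : 0 ≤ 2 * σ ^ 4 + σ ^ 2) s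
  rw [abs_mul, lognormalPdf_rpow_eq_mul_exp μ hσ hx]
  change |scoreU2 μ σ x| * |C * exp (-(β / (2 * σ ^ 2) * s ^ 2))| ≤ _
  rw [abs_of_pos (mul_pos hC (exp_pos _))]
  calc |scoreU2 μ σ x| * (C * exp (-(β / (2 * σ ^ 2) * s ^ 2)))
      ≤ (2 * s ^ 2 + (2 * σ ^ 4 + σ ^ 2)) / σ ^ 3 * (C * exp (-(β / (2 * σ ^ 2) * s ^ 2))) := by
        gcongr
        exact abs_scoreU2_le μ hσ x
    _ = C / σ ^ 3 * ((2 * s ^ 2 + (2 * σ ^ 4 + σ ^ 2)) * exp (-(β / (2 * σ ^ 2) * s ^ 2))) := by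
        ring
    _ ≤ _ := by gcongr
end
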